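/- For the two-agent, two-good instance with value vectors (96,38), (4,62), (100,0), (0,100) of the four allocations, the distribution p = (25/31, 0, 0, 6/31) is the unique minimizer of the sum-of-variances Φ over the polytope P of ex-ante proportional distributions: every extreme point of P other than (25/31, 0, 0, 6/31) has Φ-value strictly greater than Φ(25/31, 0, 0, 6/31) = (25/31)(6/31)(96² + 62²). -/
import Mathlib


/-- Agent 1's value vector over the four allocations. -/
def x1v : Fin 4 → ℝ := ![96, 4, 100, 0]

/-- Agent 2's value vector over the four allocations. -/
def x2v : Fin 4 → ℝ := ![38, 62, 0, 100]

/-- Sum-of-variances of the distribution `p` over the four allocations. -/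
def Phi19 (p : Fin 4 → ℝ) : ℝ :=
  (∑ j, p j * (x1v j ^ 2 + x2v j ^ 2)) - (∑ j, p j * x1v j) ^ 2 - (∑ j, p j * x2v j) ^ 2

/-- The polytope of ex-ante proportional distributions. -/
def Pset19 : Set (Fin 4 → ℝ) :=
  {p | p ∈ stdSimplex ℝ (Fin 4) ∧ 50 ≤ ∑ j, p j * x1v j ∧ 50 ≤ ∑ j, p j * x2v j}

/-- The distribution (25/31, 0, 0, 6/31). -/
noncomputable def pstar19 : Fin 4 → ℝ := ![25 / 31, 0, 0, 6 / 31]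

lemma phi_star_val : Phi19 pstar19 = (25 / 31) * (6 / 31) * (96 ^ 2 + 62 ^ 2) := by
  simp [Phi19, pstar19, x1v, x2v, Fin.sum_univ_four]
  norm_num

lemma key_ineq (p : Fin 4 → ℝ) (hp : p ∈ Pset19) :
    Phi19 pstar19 + (p 1 + p 2 + ((∑ j, p j * x2v j) - 50)) ≤ Phi19 p := by
  obtain ⟨⟨hnn, hsum⟩, h1, h2⟩ := hp
  have ha := hnn 0
  have hb := hnn 1
  have hc := hnn 2
  have hd := hnn 3
  simp only [Fin.sum_univ_four, x1v, x2v, Matrix.cons_val_zero, Matrix.cons_val_one,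
    Matrix.head_cons, Matrix.cons_val_two, Matrix.tail_cons, Matrix.cons_val_three] at h1 h2 hsum ⊢
  rw [phi_star_val]
  set a := p 0; set b := p 1; set c := p 2; set d := p 3
  have g5 : (0:ℝ) ≤ 96 * a + 4 * b + 100 * c - 50 := by linarith
  have g6 : (0:ℝ) ≤ 38 * a + 62 * b + 100 * d - 50 := by linarith
  simp only [Phi19, Fin.sum_univ_four, x1v, x2v, Matrix.cons_val_zero, Matrix.cons_val_one,
    Matrix.head_cons, Matrix.cons_val_two, Matrix.tail_cons, Matrix.cons_val_three]
  nlinarith [mul_nonneg ha hb, mul_nonneg hb hc, mul_nonneg hb hd, mul_nonneg hb g5,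
    mul_nonneg ha hc, mul_nonneg hc hd, mul_nonneg ha g6, mul_nonneg g5 g6,
    mul_nonneg hc hd, hc, hsum]

lemma pstar_mem : pstar19 ∈ Pset19 := by
  refine ⟨⟨fun i => ?_, ?_⟩, ?_, ?_⟩
  · fin_cases i <;> simp [pstar19] <;> norm_num
  all_goals
    simp [pstar19, x1v, x2v, Fin.sum_univ_four]
    norm_num

/-- `pstar = (25/31, 0, 0, 6/31)` lies in `P`, has
Φ(pstar) = (25/31)(6/31)(96² + 62²), and is the unique minimizer of Φ over `P`;
in particular every extreme point of `P` other than `pstar` has strictly larger Φ. -/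
theorem pstar_unique_sov_minimizer :
    pstar19 ∈ Pset19 ∧
    Phi19 pstar19 = (25 / 31) * (6 / 31) * (96 ^ 2 + 62 ^ 2) ∧
    (∀ p ∈ Pset19, Phi19 pstar19 ≤ Phi19 p) ∧
    (∀ p ∈ Pset19, Phi19 p = Phi19 pstar19 → p = pstar19) ∧
    (∀ p ∈ Set.extremePoints ℝ Pset19, p ≠ pstar19 → Phi19 pstar19 < Phi19 p) := by
  have hle : ∀ p ∈ Pset19, Phi19 pstar19 ≤ Phi19 p := by
    intro p hp
    have := key_ineq p hp
    have hb := hp.1.1 1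
    have hc := hp.1.1 2
    have h2 := hp.2.2
    linarith
  have huniq : ∀ p ∈ Pset19, Phi19 p = Phi19 pstar19 → p = pstar19 := by
    intro p hp heq
    have hk := key_ineq p hp
    obtain ⟨⟨hnn, hsum⟩, h1, h2⟩ := hp
    have hb := hnn 1
    have hc := hnn 2
    have hb0 : p 1 = 0 := by linarith
    have hc0 : p 2 = 0 := by linarith
    have hs2 : (∑ j, p j * x2v j) = 50 := by linarith
    simp only [Fin.sum_univ_four, x2v, Matrix.cons_val_zero, Matrix.cons_val_one,
      Matrix.head_cons, Matrix.cons_val_two, Matrix.tail_cons, Matrix.cons_val_three] at hs2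
    simp only [Fin.sum_univ_four] at hsum
    funext i
    fin_cases i <;> simp [pstar19] <;> linarith
  refine ⟨pstar_mem, phi_star_val, hle, huniq, ?_⟩
  intro p hp hne
  have hpP : p ∈ Pset19 := hp.1
  rcases lt_or_eq_of_le (hle p hpP) with h | h
  · exact h
  · exact absurd (huniq p hpP h.symm) hne
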